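/- arXiv:2204.04388 — 2 statements merged into one kernel-verified Lean document; each statement's English description precedes it below -/
import Mathlib

section
/- For the grid graph G = P_m □ P_n with m, n ≥ 2, mvd(G) = 2. -/
/-! The checkerboard colouring is an MVD-colouring with two colours: two distinct nonadjacent
vertices differ by at least 2 in `i + j` or in `i - j`, so a level set of that linear form lying
strictly between them separates them (a walk changes it by at most one per step), and each such
level set has constant parity. Conversely, every separator of a nonadjacent pair contains all its
common neighbours, so in any MVD-colouring the two common neighbours `(i, j + 1)`, `(i + 1, j)` of
`(i, j)` and `(i + 1, j + 1)` share a colour; chaining these equalities shows that every vertex has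
the colour of `(0, 0)` or of `(0, 1)`. -/

open SimpleGraph

variable {V : Type*}

/-- `S` is a set of vertices (not containing `x` or `y`) whose removal separates `x` from `y`:
every walk from `x` to `y` meets `S`. -/
def IsSepSet (G : SimpleGraph V) (S : Set V) (x y : V) : Prop :=
  x ∉ S ∧ y ∉ S ∧ ∀ p : G.Walk x y, ∃ v ∈ p.support, v ∈ S

/-- `τ` is an MVD-coloring of `G`: every pair of distinct nonadjacent vertices is
separated by a monochromatic vertex cut. -/
def IsMVDColoring (G : SimpleGraph V) (τ : V → ℕ) : Prop :=
  ∀ x y : V, x ≠ y → ¬ G.Adj x y →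
    ∃ S : Set V, IsSepSet G S x y ∧ ∀ u ∈ S, ∀ w ∈ S, τ u = τ w

/-- The monochromatic vertex-disconnection number: the maximum number of colors
used by an MVD-coloring of `G`. -/
noncomputable def mvd (G : SimpleGraph V) : ℕ :=
  sSup {k | ∃ τ : V → ℕ, IsMVDColoring G τ ∧ (Set.range τ).ncard = k}

section General

variable {G : SimpleGraph V}

lemma SimpleGraph.Walk.exists_mem_support_eq {f : V → ℤ}
    (hf : ∀ u v, G.Adj u v → |f u - f v| ≤ 1) {x y : V} (p : G.Walk x y) {k : ℤ}
    (hx : f x ≤ k) (hy : k ≤ f y) : ∃ v ∈ p.support, f v = k := by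
  induction p with
  | nil => exact ⟨_, List.mem_singleton_self _, le_antisymm hx hy⟩
  | @cons a b _ hab q ih =>
    by_cases hak : f a = k
    · exact ⟨a, List.mem_cons_self, hak⟩
    · have hb : f b ≤ k := by have := abs_le.mp (hf a b hab); omega
      obtain ⟨v, hv, hvk⟩ := ih hb hy
      exact ⟨v, List.mem_cons_of_mem _ hv, hvk⟩

lemma IsSepSet.symm {S : Set V} {x y : V} (h : IsSepSet G S x y) : IsSepSet G S y x :=
  ⟨h.2.1, h.1, fun p => by simpa using h.2.2 p.reverse⟩

lemma isSepSet_setOf_eq {f : V → ℤ} (hf : ∀ u v, G.Adj u v → |f u - f v| ≤ 1) {x y : V}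
    {k : ℤ} (hx : f x < k) (hy : k < f y) : IsSepSet G {v | f v = k} x y :=
  ⟨hx.ne, hy.ne', fun p => p.exists_mem_support_eq hf hx.le hy.le⟩

lemma exists_monochromatic_isSepSet {f : V → ℤ} (hf : ∀ u v, G.Adj u v → |f u - f v| ≤ 1)
    {τ : V → ℕ} (hτ : ∀ u w, f u = f w → τ u = τ w) {x y : V} (hxy : 2 ≤ |f x - f y|) :
    ∃ S, IsSepSet G S x y ∧ ∀ u ∈ S, ∀ w ∈ S, τ u = τ w := by
  wlog hle : f x ≤ f y generalizing x y
  · obtain ⟨S, hS, hmono⟩ := this (by rwa [abs_sub_comm]) (by omega)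
    exact ⟨S, hS.symm, hmono⟩
  rw [abs_sub_comm, abs_of_nonneg (by omega)] at hxy
  exact ⟨{v | f v = f x + 1}, isSepSet_setOf_eq hf (by omega) (by omega),
    fun u hu w hw => hτ u w (hu.trans hw.symm)⟩

lemma IsSepSet.mem_of_mem_commonNeighbors {S : Set V} {x y u : V} (hS : IsSepSet G S x y)
    (hu : u ∈ G.commonNeighbors x y) : u ∈ S := by
  rw [mem_commonNeighbors] at hu
  obtain ⟨v, hv, hvS⟩ := hS.2.2 (.cons hu.1 (.cons hu.2.symm .nil))
  simp only [Walk.support_cons, Walk.support_nil, List.mem_cons, List.not_mem_nil,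
    or_false] at hv
  rcases hv with rfl | rfl | rfl
  exacts [absurd hvS hS.1, hvS, absurd hvS hS.2.1]

lemma IsMVDColoring.eq_of_mem_commonNeighbors {τ : V → ℕ} (hτ : IsMVDColoring G τ)
    {x y u w : V} (hxy : x ≠ y) (hna : ¬ G.Adj x y) (hu : u ∈ G.commonNeighbors x y)
    (hw : w ∈ G.commonNeighbors x y) : τ u = τ w := by
  obtain ⟨S, hS, hmono⟩ := hτ x y hxy hna
  exact hmono u (hS.mem_of_mem_commonNeighbors hu) w (hS.mem_of_mem_commonNeighbors hw)

end General

section Grid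

variable {m n : ℕ}

lemma pathGraph_boxProd_adj_iff {x y : Fin m × Fin n} :
    (pathGraph m □ pathGraph n).Adj x y ↔
      |((x.1 : ℕ) : ℤ) - y.1| + |((x.2 : ℕ) : ℤ) - y.2| = 1 := by
  simp only [boxProd_adj, pathGraph_adj, Fin.ext_iff]
  rcases abs_cases (((x.1 : ℕ) : ℤ) - y.1) with h1 | h1 <;>
  rcases abs_cases (((x.2 : ℕ) : ℤ) - y.2) with h2 | h2 <;> omega

def gridAntidiagonal (x : Fin m × Fin n) : ℤ := (x.1 : ℕ) + (x.2 : ℕ)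

def gridDiagonal (x : Fin m × Fin n) : ℤ := (x.1 : ℕ) - (x.2 : ℕ)

def checkerboard (x : Fin m × Fin n) : ℕ := ((x.1 : ℕ) + x.2) % 2

lemma abs_gridAntidiagonal_sub_le_of_adj {x y : Fin m × Fin n}
    (h : (pathGraph m □ pathGraph n).Adj x y) :
    |gridAntidiagonal x - gridAntidiagonal y| ≤ 1 := by
  rw [pathGraph_boxProd_adj_iff] at h
  unfold gridAntidiagonal
  rw [abs_le]
  rcases abs_cases (((x.1 : ℕ) : ℤ) - y.1) with h1 | h1 <;>
  rcases abs_cases (((x.2 : ℕ) : ℤ) - y.2) with h2 | h2 <;> omega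

lemma abs_gridDiagonal_sub_le_of_adj {x y : Fin m × Fin n}
    (h : (pathGraph m □ pathGraph n).Adj x y) :
    |gridDiagonal x - gridDiagonal y| ≤ 1 := by
  rw [pathGraph_boxProd_adj_iff] at h
  unfold gridDiagonal
  rw [abs_le]
  rcases abs_cases (((x.1 : ℕ) : ℤ) - y.1) with h1 | h1 <;>
  rcases abs_cases (((x.2 : ℕ) : ℤ) - y.2) with h2 | h2 <;> omega

lemma two_le_abs_gridAntidiagonal_sub_or_gridDiagonal_sub {x y : Fin m × Fin n} (hxy : x ≠ y)
    (hna : ¬ (pathGraph m □ pathGraph n).Adj x y) :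
    2 ≤ |gridAntidiagonal x - gridAntidiagonal y| ∨ 2 ≤ |gridDiagonal x - gridDiagonal y| := by
  rw [pathGraph_boxProd_adj_iff] at hna
  rw [Ne, Prod.ext_iff, Fin.ext_iff, Fin.ext_iff] at hxy
  unfold gridAntidiagonal gridDiagonal
  simp only [le_abs]
  rcases abs_cases (((x.1 : ℕ) : ℤ) - y.1) with h1 | h1 <;>
  rcases abs_cases (((x.2 : ℕ) : ℤ) - y.2) with h2 | h2 <;> omega

lemma isMVDColoring_checkerboard :
    IsMVDColoring (pathGraph m □ pathGraph n) checkerboard := by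
  intro x y hxy hna
  rcases two_le_abs_gridAntidiagonal_sub_or_gridDiagonal_sub hxy hna with h | h
  · exact exists_monochromatic_isSepSet (fun _ _ => abs_gridAntidiagonal_sub_le_of_adj)
      (fun u w huw => by simp only [checkerboard, gridAntidiagonal] at huw ⊢; omega) h
  · exact exists_monochromatic_isSepSet (fun _ _ => abs_gridDiagonal_sub_le_of_adj)
      (fun u w huw => by simp only [checkerboard, gridDiagonal] at huw ⊢; omega) h

lemma range_checkerboard (hm : 0 < m) (hn : 1 < n) :
    Set.range (checkerboard : Fin m × Fin n → ℕ) = {0, 1} := by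
  ext c
  constructor
  · rintro ⟨x, rfl⟩
    simp only [checkerboard, Set.mem_insert_iff, Set.mem_singleton_iff]
    omega
  · rintro (rfl | rfl)
    exacts [⟨(⟨0, hm⟩, ⟨0, by omega⟩), rfl⟩, ⟨(⟨0, hm⟩, ⟨1, hn⟩), rfl⟩]

lemma IsMVDColoring.grid_swap {τ : Fin m × Fin n → ℕ}
    (hτ : IsMVDColoring (pathGraph m □ pathGraph n) τ) {a a' : Fin m} {b b' : Fin n}
    (ha : |((a : ℕ) : ℤ) - a'| = 1) (hb : |((b : ℕ) : ℤ) - b'| = 1) :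
    τ (a, b') = τ (a', b) := by
  refine hτ.eq_of_mem_commonNeighbors (x := (a, b)) (y := (a', b')) ?_ ?_ ?_ ?_
  · rintro ⟨⟩
    simp at ha
  · rw [pathGraph_boxProd_adj_iff]
    simp only [ha, hb]
    norm_num
  all_goals
    simp only [mem_commonNeighbors, pathGraph_boxProd_adj_iff, sub_self, abs_zero, ha, hb,
      abs_sub_comm ((a' : ℕ) : ℤ), abs_sub_comm ((b' : ℕ) : ℤ)]
    norm_num

lemma IsMVDColoring.grid_eq_or_eq (hm : 2 ≤ m) (hn : 2 ≤ n) {τ : Fin m × Fin n → ℕ}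
    (hτ : IsMVDColoring (pathGraph m □ pathGraph n) τ) :
    ∀ (i j : ℕ) (hi : i < m) (hj : j < n),
      τ (⟨i, hi⟩, ⟨j, hj⟩) = τ (⟨0, by omega⟩, ⟨0, by omega⟩) ∨
      τ (⟨i, hi⟩, ⟨j, hj⟩) = τ (⟨0, by omega⟩, ⟨1, by omega⟩)
  | 0, 0, _, _ => .inl rfl
  | 0, 1, _, _ => .inr rfl
  | 0, j + 2, _, hj => by
    rw [hτ.grid_swap (a := ⟨0, by omega⟩) (a' := ⟨1, by omega⟩) (b := ⟨j + 1, by omega⟩)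
      (b' := ⟨j + 2, hj⟩) (by simp) (by simp),
      hτ.grid_swap (a := ⟨1, by omega⟩) (a' := ⟨0, by omega⟩) (b := ⟨j, by omega⟩)
      (b' := ⟨j + 1, by omega⟩) (by simp) (by simp)]
    exact hτ.grid_eq_or_eq hm hn 0 j _ _
  | i + 1, 0, hi, _ => by
    rw [← hτ.grid_swap (a := ⟨i, by omega⟩) (a' := ⟨i + 1, hi⟩) (b := ⟨0, by omega⟩)
      (b' := ⟨1, by omega⟩) (by simp) (by simp)]
    exact hτ.grid_eq_or_eq hm hn i 1 _ _
  | i + 1, j + 1, hi, hj => by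
    rw [← hτ.grid_swap (a := ⟨i, by omega⟩) (a' := ⟨i + 1, hi⟩) (b := ⟨j + 1, hj⟩)
      (b' := ⟨j, by omega⟩) (by simp) (by simp)]
    exact hτ.grid_eq_or_eq hm hn i j _ _
termination_by i j => 2 * i + j

lemma IsMVDColoring.ncard_range_grid_le (hm : 2 ≤ m) (hn : 2 ≤ n) {τ : Fin m × Fin n → ℕ}
    (hτ : IsMVDColoring (pathGraph m □ pathGraph n) τ) : (Set.range τ).ncard ≤ 2 := by
  have hsub : Set.range τ ⊆
      {τ (⟨0, by omega⟩, ⟨0, by omega⟩), τ (⟨0, by omega⟩, ⟨1, by omega⟩)} := by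
    rintro _ ⟨⟨⟨i, hi⟩, ⟨j, hj⟩⟩, rfl⟩
    exact hτ.grid_eq_or_eq hm hn i j hi hj
  calc (Set.range τ).ncard ≤ _ := Set.ncard_le_ncard hsub (Set.toFinite _)
    _ ≤ 2 := (Set.ncard_insert_le _ _).trans (by simp)

end Grid

theorem mvd_grid (m n : ℕ) (hm : 2 ≤ m) (hn : 2 ≤ n) :
    mvd ((pathGraph m) □ (pathGraph n)) = 2 := by
  refine IsGreatest.csSup_eq ⟨⟨checkerboard, isMVDColoring_checkerboard, ?_⟩, ?_⟩
  · rw [range_checkerboard (by omega) (by omega)]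
    exact Set.ncard_pair zero_ne_one
  · rintro _ ⟨τ, hτ, rfl⟩
    exact hτ.ncard_range_grid_le hm hn
end

section
/- Let G be a connected graph of order n with r blocks, of which t are trivial (isomorphic to K_2). If every block of G is a minimally 2-connected triangle-free graph, then mvd(G) ≤ ⌊(n + 2t − r + 1)/2⌋. -/
open SimpleGraph

variable {V : Type*}

/-- `G` has no cut vertex: removing any single vertex leaves a preconnected graph. -/
def NoCutVertex (G : SimpleGraph V) : Prop :=
  ∀ v : V, (G.induce {u | u ≠ v}).Preconnected

/-- `B` is a block of `G`: a maximal vertex set inducing a connected subgraph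
without a cut vertex. -/
def IsBlock (G : SimpleGraph V) (B : Set V) : Prop :=
  (G.induce B).Connected ∧ NoCutVertex (G.induce B) ∧
    ∀ C : Set V, B ⊆ C → (G.induce C).Connected → NoCutVertex (G.induce C) → C = B

/-- `G` is 2-connected: it is connected, has at least three vertices, and removing
any single vertex leaves a connected graph. -/
def IsTwoConnected (G : SimpleGraph V) : Prop :=
  G.Connected ∧ (∀ v : V, (G.induce {u | u ≠ v}).Connected) ∧
    ∃ x y z : V, x ≠ y ∧ x ≠ z ∧ y ≠ z

/-- `G` is minimally 2-connected: it is 2-connected but deleting any edge destroys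
2-connectivity. -/
def MinimallyTwoConnected (G : SimpleGraph V) : Prop :=
  IsTwoConnected G ∧ ∀ e ∈ G.edgeSet, ¬ IsTwoConnected (G.deleteEdges {e})

/-! In a triangle-free 2-connected block, two neighbours `x`, `y` of a vertex `a` are
nonadjacent, and every monochromatic `x`–`y` cut contains `a` together with a vertex of an
`x`–`y` path avoiding `a`. Hence every colour class meets such a block in at least two vertices,
so the block sees at most half as many colours as it has vertices; a trivial block sees at most
two. Building `G` up one block at a time, each new block meets the previous ones in exactly one
vertex, so it adds `|B| - 1` vertices and at most `(colours on B) - 1` new colours. Summing over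
the blocks gives `2 mvd(G) + r ≤ n + 2t + 1`. -/

namespace SimpleGraph

def ReachableWithin (G : SimpleGraph V) (W : Set V) (u v : V) : Prop :=
  ∃ p : G.Walk u v, ∀ x ∈ p.support, x ∈ W

namespace ReachableWithin

variable {G : SimpleGraph V} {W W' : Set V} {u v w : V}

theorem refl (hu : u ∈ W) : G.ReachableWithin W u u :=
  ⟨.nil, by simpa⟩

theorem symm (h : G.ReachableWithin W u v) : G.ReachableWithin W v u :=
  let ⟨p, hp⟩ := h
  ⟨p.reverse, by simpa using hp⟩

theorem trans (h₁ : G.ReachableWithin W u v) (h₂ : G.ReachableWithin W v w) :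
    G.ReachableWithin W u w :=
  let ⟨p, hp⟩ := h₁
  let ⟨q, hq⟩ := h₂
  ⟨p.append q, fun x hx => (Walk.mem_support_append_iff p q).mp hx |>.elim (hp x) (hq x)⟩

theorem mono (h : G.ReachableWithin W u v) (hW : W ⊆ W') : G.ReachableWithin W' u v :=
  let ⟨p, hp⟩ := h
  ⟨p, fun x hx => hW (hp x hx)⟩

theorem exists_adj (h : G.ReachableWithin W u v) (huv : u ≠ v) : ∃ x ∈ W, G.Adj u x := by
  obtain ⟨p, hp⟩ := h
  cases p with
  | nil => exact absurd rfl huv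
  | cons hadj q => exact ⟨_, hp _ (by simp), hadj⟩

end ReachableWithin

theorem reachable_induce_iff {G : SimpleGraph V} {W : Set V} {u v : W} :
    (G.induce W).Reachable u v ↔ G.ReachableWithin W u v :=
  ⟨fun ⟨p⟩ => ⟨p.map ⟨Subtype.val, id⟩, fun x hx => by
      rw [Walk.support_map, List.mem_map] at hx
      obtain ⟨y, -, rfl⟩ := hx
      exact y.2⟩,
    fun ⟨p, hp⟩ => ⟨p.induce W hp⟩⟩

theorem preconnected_induce_iff_reachableWithin {G : SimpleGraph V} {W : Set V} :
    (G.induce W).Preconnected ↔ ∀ u ∈ W, ∀ v ∈ W, G.ReachableWithin W u v := by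
  simp only [Preconnected, reachable_induce_iff, Subtype.forall]

end SimpleGraph

def IsNonseparable (G : SimpleGraph V) (W : Set V) : Prop :=
  (G.induce W).Connected ∧ NoCutVertex (G.induce W)

theorem noCutVertex_induce_iff {G : SimpleGraph V} {W : Set V} :
    NoCutVertex (G.induce W) ↔ ∀ z ∈ W, (G.induce (W \ {z})).Preconnected := by
  have e : ∀ z : W, (G.induce W).induce {u | u ≠ z} ≃g G.induce (W \ {(z : V)}) := fun z =>
    { toFun x := ⟨x.1.1, x.1.2, fun h => x.2 (Subtype.ext h)⟩
      invFun y := ⟨⟨y.1, y.2.1⟩, fun h => y.2.2 (congrArg Subtype.val h)⟩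
      left_inv _ := rfl
      right_inv _ := rfl
      map_rel_iff' := Iff.rfl }
  simp only [NoCutVertex, fun z => (e z).preconnected_iff, Subtype.forall]

theorem isNonseparable_iff {G : SimpleGraph V} {W : Set V} :
    IsNonseparable G W ↔ W.Nonempty ∧ ∀ Z : Set V, Z.Subsingleton →
      ∀ u ∈ W \ Z, ∀ v ∈ W \ Z, G.ReachableWithin (W \ Z) u v := by
  simp only [IsNonseparable, connected_iff, noCutVertex_induce_iff, Set.nonempty_coe_sort,
    preconnected_induce_iff_reachableWithin]
  constructor
  · rintro ⟨⟨hconn, hne⟩, hcut⟩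
    refine ⟨hne, fun Z hZ => ?_⟩
    rcases hZ.eq_empty_or_singleton with rfl | ⟨z, rfl⟩
    · simpa using hconn
    · by_cases hz : z ∈ W
      · exact hcut z hz
      · simpa [Set.sdiff_singleton_eq_self hz] using hconn
  · rintro ⟨hne, h⟩
    exact ⟨⟨by simpa using h ∅ Set.subsingleton_empty, hne⟩,
      fun z _ => h {z} Set.subsingleton_singleton⟩

namespace IsNonseparable

variable {G : SimpleGraph V} {W A C Z : Set V} {u v x y : V}

theorem reachableWithin (hW : IsNonseparable G W) (hZ : Z.Subsingleton) (hu : u ∈ W \ Z)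
    (hv : v ∈ W \ Z) : G.ReachableWithin (W \ Z) u v :=
  (isNonseparable_iff.mp hW).2 Z hZ u hu v hv

theorem reachableWithin_of_mem (hW : IsNonseparable G W) (hu : u ∈ W) (hv : v ∈ W) :
    G.ReachableWithin W u v := by
  simpa using hW.reachableWithin Set.subsingleton_empty (u := u) (v := v) (by simpa) (by simpa)

theorem union (hA : IsNonseparable G A) (hC : IsNonseparable G C) (hxy : x ≠ y)
    (hx : x ∈ A ∩ C) (hy : y ∈ A ∩ C) : IsNonseparable G (A ∪ C) := by
  refine isNonseparable_iff.mpr ⟨⟨x, .inl hx.1⟩, fun Z hZ => ?_⟩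
  obtain ⟨s, hs, hsZ⟩ : ∃ s ∈ A ∩ C, s ∉ Z := by
    by_contra! h
    exact hxy (hZ (h x hx) (h y hy))
  have hub : ∀ u ∈ (A ∪ C) \ Z, G.ReachableWithin ((A ∪ C) \ Z) u s := by
    rintro u ⟨hu | hu, huZ⟩
    · exact (hA.reachableWithin hZ ⟨hu, huZ⟩ ⟨hs.1, hsZ⟩).mono
        (Set.sdiff_subset_sdiff_left Set.subset_union_left)
    · exact (hC.reachableWithin hZ ⟨hu, huZ⟩ ⟨hs.2, hsZ⟩).mono
        (Set.sdiff_subset_sdiff_left Set.subset_union_right)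
  exact fun u hu v hv => (hub u hu).trans (hub v hv).symm

end IsNonseparable

theorem isNonseparable_singleton (G : SimpleGraph V) (v : V) : IsNonseparable G {v} := by
  refine isNonseparable_iff.mpr ⟨⟨v, rfl⟩, fun Z _ a ha b hb => ?_⟩
  obtain rfl : a = v := ha.1
  obtain rfl : b = a := hb.1
  exact .refl ha

theorem isNonseparable_pair {G : SimpleGraph V} {u v : V} (h : G.Adj u v) :
    IsNonseparable G {u, v} := by
  refine isNonseparable_iff.mpr ⟨⟨u, .inl rfl⟩, fun Z _ a ha b hb => ?_⟩
  rcases eq_or_ne a b with rfl | hab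
  · exact .refl ha
  have hadj : G.Adj a b := by
    rcases ha.1 with rfl | rfl <;> rcases hb.1 with rfl | rfl
    exacts [absurd rfl hab, h, h.symm, absurd rfl hab]
  refine ⟨.cons hadj .nil, fun x hx => ?_⟩
  rcases List.mem_pair.mp hx with rfl | rfl
  exacts [ha, hb]

theorem IsTwoConnected.isNonseparable {G : SimpleGraph V} {W : Set V}
    (h : IsTwoConnected (G.induce W)) : IsNonseparable G W :=
  ⟨h.1, fun v => (h.2.1 v).preconnected⟩

theorem IsTwoConnected.three_le_ncard [Finite V] {G : SimpleGraph V} {W : Set V}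
    (h : IsTwoConnected (G.induce W)) : 3 ≤ W.ncard := by
  obtain ⟨-, -, x, y, z, hxy, hxz, hyz⟩ := h
  rw [← Nat.card_coe_set_eq, ← Set.ncard_univ,
    ← Set.ncard_eq_three.mpr ⟨x, y, z, hxy, hxz, hyz, rfl⟩]
  exact Set.ncard_le_ncard (Set.subset_univ _)

/-- The two halves of `p` at `u` share only `u`, so `Z` misses one of them. -/
theorem SimpleGraph.Walk.IsPath.exists_reachableWithin_sdiff {G : SimpleGraph V} {s t u : V}
    {p : G.Walk s t} (hp : p.IsPath) {Z : Set V} (hZ : Z.Subsingleton) (hu : u ∈ p.support)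
    (huZ : u ∉ Z) :
    (s ∉ Z ∧ G.ReachableWithin ({x | x ∈ p.support} \ Z) u s) ∨
      (t ∉ Z ∧ G.ReachableWithin ({x | x ∈ p.support} \ Z) u t) := by
  obtain ⟨q, r, -, -, rfl⟩ := hp.mem_support_iff_exists_append.mp hu
  by_cases hq : ∀ x ∈ q.support, x ∉ Z
  · refine .inl ⟨hq s q.start_mem_support, q.reverse, fun x hx => ?_⟩
    rw [Walk.support_reverse, List.mem_reverse] at hx
    exact ⟨(Walk.mem_support_append_iff q r).mpr (.inl hx), hq x hx⟩
  · push Not at hq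
    obtain ⟨z, hzq, hzZ⟩ := hq
    have hr : ∀ x ∈ r.support, x ∉ Z := fun x hx hxZ =>
      hp.ne_of_mem_support_of_append (fun h => huZ (h ▸ hxZ)) hzq hx (hZ hzZ hxZ)
    exact .inr ⟨hr t r.end_mem_support, r,
      fun x hx => ⟨(Walk.mem_support_append_iff q r).mpr (.inr hx), hr x hx⟩⟩

namespace IsBlock

variable {G : SimpleGraph V} {B C : Set V}

theorem isNonseparable (hB : IsBlock G B) : IsNonseparable G B :=
  ⟨hB.1, hB.2.1⟩

theorem eq_of_subset (hB : IsBlock G B) (hBC : B ⊆ C) (hC : IsNonseparable G C) : C = B :=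
  hB.2.2 C hBC hC.1 hC.2

theorem eq_of_mem_of_mem (hB : IsBlock G B) (hC : IsBlock G C) {x y : V} (hxy : x ≠ y)
    (hx : x ∈ B ∩ C) (hy : y ∈ B ∩ C) : B = C := by
  have hBC := hB.isNonseparable.union hC.isNonseparable hxy hx hy
  exact (hB.eq_of_subset Set.subset_union_left hBC).symm.trans
    (hC.eq_of_subset Set.subset_union_right hBC)

theorem support_subset_of_isPath (hB : IsBlock G B) {s t : V} {p : G.Walk s t}
    (hp : p.IsPath) (hs : s ∈ B) (ht : t ∈ B) (hst : s ≠ t) : ∀ x ∈ p.support, x ∈ B := by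
  set W := B ∪ {x | x ∈ p.support}
  suffices hW : IsNonseparable G W from
    fun x hx => hB.eq_of_subset Set.subset_union_left hW ▸ Set.mem_union_right B hx
  refine isNonseparable_iff.mpr ⟨⟨s, .inl hs⟩, fun Z hZ => ?_⟩
  obtain ⟨c, hc, hcZ⟩ : ∃ c ∈ B, c ∉ Z := by
    by_contra! h
    exact hst (hZ (h s hs) (h t ht))
  have hBW : B \ Z ⊆ W \ Z := Set.sdiff_subset_sdiff_left Set.subset_union_left
  have hpW : {x | x ∈ p.support} \ Z ⊆ W \ Z := Set.sdiff_subset_sdiff_left Set.subset_union_right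
  have hBc : ∀ u ∈ B \ Z, G.ReachableWithin (W \ Z) u c := fun u hu =>
    (hB.isNonseparable.reachableWithin hZ hu ⟨hc, hcZ⟩).mono hBW
  have hub : ∀ u ∈ W \ Z, G.ReachableWithin (W \ Z) u c := by
    rintro u ⟨hu | hu, huZ⟩
    · exact hBc u ⟨hu, huZ⟩
    · rcases hp.exists_reachableWithin_sdiff hZ hu huZ with ⟨hsZ, h⟩ | ⟨htZ, h⟩
      · exact (h.mono hpW).trans (hBc s ⟨hs, hsZ⟩)
      · exact (h.mono hpW).trans (hBc t ⟨ht, htZ⟩)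
  exact fun u hu v hv => (hub u hu).trans (hub v hv).symm

end IsBlock

theorem exists_isBlock_superset [Finite V] {G : SimpleGraph V} {C : Set V}
    (hC : IsNonseparable G C) : ∃ B, C ⊆ B ∧ IsBlock G B := by
  obtain ⟨B, ⟨hCB, hB⟩, hmax⟩ := Set.Finite.exists_maximalFor Set.ncard
    {B | C ⊆ B ∧ IsNonseparable G B} (Set.toFinite _) ⟨C, subset_rfl, hC⟩
  refine ⟨B, hCB, hB.1, hB.2, fun D hBD hD₁ hD₂ => ?_⟩
  exact (Set.eq_of_subset_of_ncard_le hBD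
    (hmax ⟨hCB.trans hBD, hD₁, hD₂⟩ (Set.ncard_le_ncard hBD))).symm

theorem exists_isBlock_mem [Finite V] (G : SimpleGraph V) (v : V) : ∃ B, v ∈ B ∧ IsBlock G B :=
  let ⟨B, hvB, hB⟩ := exists_isBlock_superset (isNonseparable_singleton G v)
  ⟨B, hvB rfl, hB⟩

theorem exists_isBlock_of_adj [Finite V] {G : SimpleGraph V} {u v : V} (h : G.Adj u v) :
    ∃ B, u ∈ B ∧ v ∈ B ∧ IsBlock G B :=
  let ⟨B, huvB, hB⟩ := exists_isBlock_superset (isNonseparable_pair h)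
  ⟨B, huvB (.inl rfl), huvB (.inr rfl), hB⟩

theorem iUnion_eq_univ_of_forall_isBlock [Finite V] {G : SimpleGraph V} {ι : Type*}
    {B : ι → Set V} (hall : ∀ C : Set V, IsBlock G C → ∃ i, B i = C) : ⋃ i, B i = Set.univ :=
  Set.eq_univ_of_forall fun v => by
    obtain ⟨C, hvC, hC⟩ := exists_isBlock_mem G v
    obtain ⟨i, rfl⟩ := hall C hC
    exact Set.mem_iUnion_of_mem i hvC

theorem exists_mem_mem_of_adj_of_forall_isBlock [Finite V] {G : SimpleGraph V} {ι : Type*}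
    {B : ι → Set V} (hall : ∀ C : Set V, IsBlock G C → ∃ i, B i = C) {u v : V}
    (h : G.Adj u v) : ∃ i, u ∈ B i ∧ v ∈ B i := by
  obtain ⟨C, huC, hvC, hC⟩ := exists_isBlock_of_adj h
  obtain ⟨i, rfl⟩ := hall C hC
  exact ⟨i, huC, hvC⟩

theorem Set.two_mul_ncard_image_le {α β : Type*} {f : α → β} {W : Set α} (hW : W.Finite)
    (h : ∀ a ∈ W, ∃ b ∈ W, b ≠ a ∧ f b = f a) : 2 * (f '' W).ncard ≤ W.ncard := by
  classical
  obtain ⟨s, rfl⟩ := hW.exists_finset_coe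
  rw [← Finset.coe_image, Set.ncard_coe_finset, Set.ncard_coe_finset]
  refine Finset.mul_card_image_le_card s 2 fun c hc => ?_
  obtain ⟨a, ha, rfl⟩ := Finset.mem_image.mp hc
  obtain ⟨b, hb, hba, hfb⟩ := h a ha
  exact Finset.one_lt_card.mpr ⟨a, by simp [ha], b, by simp [Finset.mem_coe.mp hb, hfb], hba.symm⟩

namespace IsMVDColoring

variable [Finite V] {G : SimpleGraph V} {τ : V → ℕ} {B : Set V}

theorem exists_ne_eq_of_cliqueFree (hτ : IsMVDColoring G τ) (hB : IsTwoConnected (G.induce B))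
    (hcf : (G.induce B).CliqueFree 3) {a : V} (ha : a ∈ B) : ∃ b ∈ B, b ≠ a ∧ τ b = τ a := by
  classical
  have hns := hB.isNonseparable
  have h3 := hB.three_le_ncard
  obtain ⟨u, hu, hua⟩ := Set.exists_ne_of_one_lt_ncard (s := B) (by omega) a
  obtain ⟨x, hxB, hax⟩ := (hns.reachableWithin_of_mem ha hu).exists_adj hua.symm
  obtain ⟨u', hu', hu'a⟩ := Set.exists_ne_of_one_lt_ncard (s := B \ {x})
    (by rw [Set.ncard_sdiff_singleton_of_mem hxB]; omega) a
  obtain ⟨y, hyB, hay⟩ := (hns.reachableWithin Set.subsingleton_singleton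
    ⟨ha, hax.ne⟩ hu').exists_adj hu'a.symm
  have hxy : ¬ G.Adj x y := fun hxy =>
    hcf {⟨a, ha⟩, ⟨x, hxB⟩, ⟨y, hyB.1⟩}
      (is3Clique_triple_iff.mpr ⟨induce_adj.mpr hax, induce_adj.mpr hay, induce_adj.mpr hxy⟩)
  obtain ⟨S, ⟨hxS, hyS, hsep⟩, hmono⟩ := hτ x y (fun h => hyB.2 h.symm) hxy
  have haS : a ∈ S := by
    obtain ⟨z, hz, hzS⟩ := hsep (.cons hax.symm (.cons hay .nil))
    simp only [Walk.support_cons, Walk.support_nil, List.mem_cons, List.not_mem_nil,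
      or_false] at hz
    rcases hz with rfl | rfl | rfl
    exacts [absurd hzS hxS, hzS, absurd hzS hyS]
  obtain ⟨p, hp⟩ := hns.reachableWithin Set.subsingleton_singleton
    (⟨hxB, hax.ne.symm⟩ : x ∈ B \ {a}) ⟨hyB.1, hay.ne.symm⟩
  obtain ⟨b, hb, hbS⟩ := hsep p
  exact ⟨b, (hp b hb).1, (hp b hb).2, hmono b hbS a haS⟩

theorem two_mul_ncard_image_le (hτ : IsMVDColoring G τ) (hB : IsTwoConnected (G.induce B))
    (hcf : (G.induce B).CliqueFree 3) : 2 * (τ '' B).ncard ≤ B.ncard :=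
  Set.two_mul_ncard_image_le (Set.toFinite B) fun _ ha => hτ.exists_ne_eq_of_cliqueFree hB hcf ha

theorem two_mul_ncard_image_le_add (hτ : IsMVDColoring G τ)
    (hB : B.ncard = 2 ∨ (MinimallyTwoConnected (G.induce B) ∧ (G.induce B).CliqueFree 3)) :
    2 * (τ '' B).ncard ≤ B.ncard + if B.ncard = 2 then 2 else 0 := by
  rcases hB with h2 | ⟨hmtc, hcf⟩
  · have := Set.ncard_image_le (f := τ) (Set.toFinite B)
    simp only [h2, if_true] at this ⊢
    omega
  · have := hτ.two_mul_ncard_image_le hmtc.1 hcf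
    omega

end IsMVDColoring

section BlockFamily

variable {ι : Type*} {G : SimpleGraph V} {B : ι → Set V} {S : Finset ι}

def SimpleGraph.unionInduce (G : SimpleGraph V) (B : ι → Set V) (S : Finset ι) :
    SimpleGraph V where
  Adj u v := G.Adj u v ∧ ∃ i ∈ S, u ∈ B i ∧ v ∈ B i
  symm := ⟨fun _ _ h => ⟨h.1.symm, h.2.imp fun _ ⟨hi, hu, hv⟩ => ⟨hi, hv, hu⟩⟩⟩
  loopless := ⟨fun _ h => G.irrefl h.1⟩

theorem SimpleGraph.unionInduce_adj {u v : V} :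
    (G.unionInduce B S).Adj u v ↔ G.Adj u v ∧ ∃ i ∈ S, u ∈ B i ∧ v ∈ B i :=
  Iff.rfl

theorem SimpleGraph.unionInduce_le : G.unionInduce B S ≤ G := fun _ _ h => (unionInduce_adj.mp h).1

theorem SimpleGraph.unionInduce_mono {T : Finset ι} (h : S ⊆ T) :
    G.unionInduce B S ≤ G.unionInduce B T :=
  fun _ _ hadj =>
    let ⟨hadj, i, hi, hu, hv⟩ := unionInduce_adj.mp hadj
    unionInduce_adj.mpr ⟨hadj, i, h hi, hu, hv⟩

theorem SimpleGraph.reachable_unionInduce {i : ι} (hB : (G.induce (B i)).Preconnected)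
    (hi : i ∈ S) {u v : V} (hu : u ∈ B i) (hv : v ∈ B i) : (G.unionInduce B S).Reachable u v :=
  (hB ⟨u, hu⟩ ⟨v, hv⟩).map ⟨Subtype.val, fun {x y} h => unionInduce_adj.mpr ⟨h, i, hi, x.2, y.2⟩⟩

def IsLinked (G : SimpleGraph V) (B : ι → Set V) (S : Finset ι) : Prop :=
  ∀ u ∈ ⋃ i ∈ S, B i, ∀ v ∈ ⋃ i ∈ S, B i, (G.unionInduce B S).Reachable u v

theorem isLinked_singleton {i : ι} (hB : (G.induce (B i)).Preconnected) :
    IsLinked G B {i} := by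
  simp only [IsLinked, Finset.set_biUnion_singleton]
  exact fun u hu v hv => reachable_unionInduce hB (Finset.mem_singleton_self i) hu hv

theorem IsLinked.insert_of_inter_nonempty [DecidableEq ι] (hS : IsLinked G B S) {i : ι}
    (hB : (G.induce (B i)).Preconnected) (hmeet : (B i ∩ ⋃ j ∈ S, B j).Nonempty) :
    IsLinked G B (insert i S) := by
  obtain ⟨x, hxi, hxS⟩ := hmeet
  have hub : ∀ u ∈ ⋃ j ∈ insert i S, B j, (G.unionInduce B (insert i S)).Reachable u x := by
    intro u hu
    rw [Finset.set_biUnion_insert] at hu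
    rcases hu with hu | hu
    · exact reachable_unionInduce hB (Finset.mem_insert_self i S) hu hxi
    · exact (hS u hu x hxS).mono (unionInduce_mono (Finset.subset_insert i S))
  exact fun u hu v hv => (hub u hu).trans (hub v hv).symm

/-- A path inside the union between two common vertices lies in `C`, so its first edge lies in
both `C` and some `B j`. -/
theorem IsBlock.inter_biUnion_subsingleton {C : Set V} (hC : IsBlock G C)
    (hB : ∀ j ∈ S, IsBlock G (B j)) (hne : ∀ j ∈ S, B j ≠ C) (hS : IsLinked G B S) :
    (C ∩ ⋃ j ∈ S, B j).Subsingleton := by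
  rintro x ⟨hxC, hxS⟩ y ⟨hyC, hyS⟩
  by_contra hxy
  obtain ⟨p, hp⟩ := (hS x hxS y hyS).exists_isPath
  have hpC := hC.support_subset_of_isPath (hp.mapLe unionInduce_le) hxC hyC hxy
  rw [Walk.support_mapLe_eq_support] at hpC
  cases p with
  | nil => exact hxy rfl
  | cons h q =>
    obtain ⟨hadj, j, hj, hxj, hwj⟩ := unionInduce_adj.mp h
    exact hne j hj ((hB j hj).eq_of_mem_of_mem hC hadj.ne ⟨hxj, hxC⟩ ⟨hwj, hpC _ (by simp)⟩)

theorem exists_inter_biUnion_nonempty (hconn : G.Preconnected) (hBne : ∀ i, (B i).Nonempty)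
    (hedge : ∀ u v, G.Adj u v → ∃ i, u ∈ B i ∧ v ∈ B i) (hS : S.Nonempty) {i₀ : ι}
    (hi₀ : i₀ ∉ S) : ∃ i ∉ S, (B i ∩ ⋃ j ∈ S, B j).Nonempty := by
  by_cases hU : ∀ w, w ∈ ⋃ j ∈ S, B j
  · obtain ⟨w, hw⟩ := hBne i₀
    exact ⟨i₀, hi₀, w, hw, hU w⟩
  push Not at hU
  obtain ⟨w, hw⟩ := hU
  obtain ⟨j, hj⟩ := hS
  obtain ⟨v, hv⟩ := hBne j
  obtain ⟨p⟩ := hconn v w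
  obtain ⟨d, -, hd₁, hd₂⟩ := p.exists_boundary_dart _ (Set.mem_biUnion hj hv) hw
  obtain ⟨i, hi₁, hi₂⟩ := hedge _ _ d.adj
  exact ⟨i, fun hiS => hd₂ (Set.mem_biUnion hiS hi₂), d.fst, hi₁, hd₁⟩

end BlockFamily

theorem Set.ncard_image_union_add_one_le {α β : Type*} [Finite α] (f : α → β) {A C : Set α}
    (h : (A ∩ C).Nonempty) : (f '' (A ∪ C)).ncard + 1 ≤ (f '' A).ncard + (f '' C).ncard := by
  obtain ⟨v, hvA, hvC⟩ := h
  have hpos : 0 < (f '' A ∩ f '' C).ncard :=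
    (Set.ncard_pos (((Set.toFinite A).image f).inter_of_left _)).mpr ⟨f v, Set.mem_image_of_mem f hvA, Set.mem_image_of_mem f hvC⟩
  rw [Set.image_union, ← Set.ncard_union_add_ncard_inter _ _
    ((Set.toFinite A).image f) ((Set.toFinite C).image f)]
  omega

theorem Set.ncard_union_add_one {α : Type*} [Finite α] {A C : Set α} {v : α}
    (h : A ∩ C = {v}) : (A ∪ C).ncard + 1 = A.ncard + C.ncard := by
  rw [← Set.ncard_union_add_ncard_inter, h, Set.ncard_singleton]

section ColourBound

open Finset

variable {ι : Type*} {B : ι → Set V} {τ : V → ℕ} {S : Finset ι} {i : ι}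

def ColourBound (B : ι → Set V) (τ : V → ℕ) (S : Finset ι) : Prop :=
  2 * (τ '' ⋃ j ∈ S, B j).ncard + #S ≤ (⋃ j ∈ S, B j).ncard + 2 * #{j ∈ S | (B j).ncard = 2} + 1

theorem colourBound_singleton
    (hcol : 2 * (τ '' B i).ncard ≤ (B i).ncard + if (B i).ncard = 2 then 2 else 0) :
    ColourBound B τ {i} := by
  rw [ColourBound, Finset.set_biUnion_singleton, Finset.card_singleton, Finset.filter_singleton]
  split_ifs at * <;> simp only [Finset.card_singleton, Finset.card_empty] <;> omega

theorem ColourBound.insert_of_inter_eq_singleton [Finite V] [DecidableEq ι]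
    (hS : ColourBound B τ S) (hi : i ∉ S) {v : V}
    (hv : B i ∩ ⋃ j ∈ S, B j = {v})
    (hcol : 2 * (τ '' B i).ncard ≤ (B i).ncard + if (B i).ncard = 2 then 2 else 0) :
    ColourBound B τ (insert i S) := by
  have hcolours := Set.ncard_image_union_add_one_le τ (hv ▸ Set.singleton_nonempty v)
  have hvertices := Set.ncard_union_add_one hv
  rw [ColourBound] at hS ⊢
  rw [Finset.set_biUnion_insert, Finset.card_insert_of_notMem hi, Finset.filter_insert]
  split_ifs at * with h
  · rw [Finset.card_insert_of_notMem (by simp [hi])]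
    omega
  · omega

theorem colourBound_univ [Finite V] [Fintype ι] [DecidableEq ι] [Nonempty ι]
    {G : SimpleGraph V} (hconn : G.Preconnected)
    (hB : ∀ i, IsBlock G (B i)) (hinj : Function.Injective B)
    (hedge : ∀ u v, G.Adj u v → ∃ i, u ∈ B i ∧ v ∈ B i)
    (hcol : ∀ i, 2 * (τ '' B i).ncard ≤ (B i).ncard + if (B i).ncard = 2 then 2 else 0) :
    ColourBound B τ univ := by
  have hpre : ∀ i, (G.induce (B i)).Preconnected := fun i => (hB i).1.preconnected
  have hBne : ∀ i, (B i).Nonempty := fun i => Set.nonempty_coe_sort.mp (hB i).1.nonempty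
  have key : ∀ k < Fintype.card ι, ∃ S : Finset ι, #S = k + 1 ∧ IsLinked G B S ∧
      ColourBound B τ S := by
    intro k hk
    induction k with
    | zero =>
      obtain ⟨i⟩ := ‹Nonempty ι›
      exact ⟨{i}, rfl, isLinked_singleton (hpre i), colourBound_singleton (hcol i)⟩
    | succ k ih =>
      obtain ⟨S, hcard, hlink, hbound⟩ := ih (by omega)
      obtain ⟨i₀, -, hi₀⟩ := exists_mem_notMem_of_card_lt_card (s := S) (t := univ)
        (by rw [card_univ]; omega)
      obtain ⟨i, hiS, v, hv⟩ := exists_inter_biUnion_nonempty hconn hBne hedge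
        (card_pos.mp (by omega)) hi₀
      have hsingle : B i ∩ ⋃ j ∈ S, B j = {v} :=
        ((hB i).inter_biUnion_subsingleton (fun j _ => hB j)
          (fun j hj h => hiS (hinj h ▸ hj)) hlink).eq_singleton_of_mem hv
      exact ⟨insert i S, by rw [card_insert_of_notMem hiS, hcard],
        hlink.insert_of_inter_nonempty (hpre i) ⟨v, hv⟩,
        hbound.insert_of_inter_eq_singleton hiS hsingle (hcol i)⟩
  have hι := Fintype.card_pos (α := ι)
  obtain ⟨S, hS, -, hbound⟩ := key (Fintype.card ι - 1) (by omega)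
  rwa [eq_univ_of_card S (by omega)] at hbound

end ColourBound

theorem mvd_blocks_minimally_two_connected [Fintype V] (G : SimpleGraph V)
    (hconn : G.Connected)
    (r : ℕ) (B : Fin r → Set V)
    (hB : ∀ i, IsBlock G (B i)) (hinj : Function.Injective B)
    (hall : ∀ C : Set V, IsBlock G C → ∃ i, B i = C)
    (t : ℕ) (ht : t = {i : Fin r | (B i).ncard = 2}.ncard)
    (hmin : ∀ i, (B i).ncard = 2 ∨
      (MinimallyTwoConnected (G.induce (B i)) ∧ (G.induce (B i)).CliqueFree 3)) :
    mvd G ≤ (Fintype.card V + 2 * t - r + 1) / 2 := by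
  have hcover := iUnion_eq_univ_of_forall_isBlock hall
  have : Nonempty (Fin r) := by
    obtain ⟨v⟩ := hconn.nonempty
    obtain ⟨i, -⟩ := Set.mem_iUnion.mp (hcover ▸ Set.mem_univ v)
    exact ⟨i⟩
  refine csSup_le' ?_
  rintro _ ⟨τ, hτ, rfl⟩
  have hbound := colourBound_univ hconn.preconnected hB hinj
    (fun _ _ => exists_mem_mem_of_adj_of_forall_isBlock hall)
    (fun i => hτ.two_mul_ncard_image_le_add (hmin i))
  simp only [ColourBound, Finset.mem_univ, Set.iUnion_true, Finset.card_univ] at hbound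
  rw [hcover, Set.image_univ, Set.ncard_univ, Nat.card_eq_fintype_card, Fintype.card_fin,
    ← Set.toFinset_ofPred, ← Set.ncard_eq_toFinset_card', ← ht] at hbound
  rw [Nat.le_div_iff_mul_le two_pos]
  omega
end
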